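/- A finite group G satisfies i(G) = c(G) - 1 if and only if G is isomorphic to Z/4, the dihedral group D8 of order 8, Z/p for an odd prime p, or the dihedral group D_{2p} of order 2p for an odd prime p. -/

import Mathlib

noncomputable def numInv (G : Type*) [Group G] : ℕ := Nat.card {x : G // x ^ 2 = 1}

noncomputable def numCyc (G : Type*) [Group G] : ℕ := Nat.card {H : Subgroup G // IsCyclic H}

/-!
`x ↦ ⟨x⟩` is a bijection from the elements with `x ^ 2 = 1` onto the cyclic subgroups of order
at most 2, so `c(G) - i(G)` counts the cyclic subgroups of order greater than 2, and the condition
says there is exactly one of them, `⟨g⟩`. Then every divisor `d > 2` of `n = orderOf g` equals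
`n`, so `n = 4` or `n` is an odd prime. Every element outside `⟨g⟩` is an involution, hence
inverts `g`; the product of two such elements centralizes `g`, so it cannot be an involution
outside `⟨g⟩`. Thus `⟨g⟩` has index at most 2, and `G` is cyclic of order `n` or dihedral of
order `2n`.
-/

open Subgroup

lemma Nat.two_lt_and_forall_dvd_iff {n : ℕ} :
    (2 < n ∧ ∀ d, d ∣ n → 2 < d → d = n) ↔ n = 4 ∨ (n.Prime ∧ Odd n) := by
  constructor
  · rintro ⟨hn, hdvd⟩
    rcases Nat.even_or_odd n with ⟨m, rfl⟩ | hodd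
    · left
      have : ¬2 < m := fun hm ↦ by have := hdvd m (Dvd.intro_left 2 (by ring)) hm; omega
      omega
    · refine Or.inr ⟨Nat.prime_def.2 ⟨by omega, fun d hd ↦ ?_⟩, hodd⟩
      have : d ≠ 0 ∧ d ≠ 2 := by obtain ⟨k, rfl⟩ := hodd.of_dvd_nat hd; omega
      by_cases h1 : d = 1
      · exact Or.inl h1
      · exact Or.inr (hdvd d hd (by omega))
  · rintro (rfl | ⟨hp, hodd⟩)
    · refine ⟨by norm_num, fun d hd hd2 ↦ ?_⟩
      have := Nat.le_of_dvd (by norm_num) hd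
      interval_cases d <;> simp_all
    · have : n ≠ 2 := by rintro rfl; exact Nat.not_odd_iff_even.2 even_two hodd
      refine ⟨by have := hp.two_le; omega, fun d hd hd2 ↦ ?_⟩
      rcases hp.eq_one_or_self_of_dvd d hd with rfl | rfl <;> omega

section Counting

variable {G : Type*} [Group G]

lemma eq_one_or_eq_of_mem_zpowers_of_sq_eq_one {x y : G} (hy : y ^ 2 = 1) (hx : x ∈ zpowers y) :
    x = 1 ∨ x = y := by
  obtain ⟨k, rfl⟩ := hx
  simp only [zpow_eq_zpow_emod' k hy]
  rcases Int.emod_two_eq_zero_or_one k with h | h <;> simp [h]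

lemma eq_of_zpowers_eq_of_sq_eq_one {x y : G} (hx : x ^ 2 = 1) (hy : y ^ 2 = 1)
    (h : zpowers x = zpowers y) : x = y := by
  rcases eq_one_or_eq_of_mem_zpowers_of_sq_eq_one hy (h ▸ mem_zpowers x) with rfl | rfl
  · exact (zpowers_eq_bot.1 (h.symm.trans zpowers_one_eq_bot)).symm
  · rfl

lemma sq_eq_one_iff_orderOf_le_two {x : G} (hx : IsOfFinOrder x) :
    x ^ 2 = 1 ↔ orderOf x ≤ 2 := by
  rw [← orderOf_dvd_iff_pow_eq_one]
  have := hx.orderOf_pos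
  constructor
  · exact Nat.le_of_dvd two_pos
  · intro h
    interval_cases orderOf x <;> norm_num

variable [Finite G]

lemma numInv_eq_card_isCyclic_card_le_two :
    numInv G = Nat.card {H : Subgroup G // IsCyclic H ∧ Nat.card H ≤ 2} := by
  refine Nat.card_eq_of_bijective (fun x ↦ ⟨zpowers x.1, inferInstance, ?_⟩) ⟨?_, ?_⟩
  · rw [Nat.card_zpowers, ← sq_eq_one_iff_orderOf_le_two (isOfFinOrder_of_finite _)]
    exact x.2
  · rintro ⟨x, hx⟩ ⟨y, hy⟩ h
    exact Subtype.ext (eq_of_zpowers_eq_of_sq_eq_one hx hy (congrArg Subtype.val h))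
  · rintro ⟨H, hH, hcard⟩
    obtain ⟨x, rfl⟩ := H.isCyclic_iff_exists_zpowers_eq_top.1 hH
    rw [Nat.card_zpowers, ← sq_eq_one_iff_orderOf_le_two (isOfFinOrder_of_finite _)] at hcard
    exact ⟨⟨x, hcard⟩, rfl⟩

lemma numCyc_eq_numInv_add :
    numCyc G = numInv G + Nat.card {H : Subgroup G // IsCyclic H ∧ 2 < Nat.card H} := by
  rw [numCyc, numInv_eq_card_isCyclic_card_le_two, ← Nat.card_sum]
  refine Nat.card_congr ((Equiv.sumCompl fun H : {H : Subgroup G // IsCyclic H} ↦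
    Nat.card H ≤ 2).symm.trans (Equiv.sumCongr ?_ ?_))
  · exact Equiv.subtypeSubtypeEquivSubtypeInter (fun H : Subgroup G ↦ IsCyclic H)
      (fun H ↦ Nat.card H ≤ 2)
  · exact (Equiv.subtypeSubtypeEquivSubtypeInter (fun H : Subgroup G ↦ IsCyclic H)
      (fun H ↦ ¬Nat.card H ≤ 2)).trans (Equiv.subtypeEquivRight fun _ ↦ by simp)

lemma numInv_eq_numCyc_sub_one_iff :
    numInv G = numCyc G - 1 ↔ Nat.card {H : Subgroup G // IsCyclic H ∧ 2 < Nat.card H} = 1 := by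
  have : Nonempty {x : G // x ^ 2 = 1} := ⟨⟨1, one_pow 2⟩⟩
  have : 0 < numInv G := Nat.card_pos
  rw [numCyc_eq_numInv_add]
  omega

end Counting

def HasUniqueLargeCyclicSubgroup (G : Type*) [Group G] : Prop :=
  ∃ g : G, 2 < orderOf g ∧ ∀ x : G, 2 < orderOf x → zpowers x = zpowers g

section UniqueLargeCyclicSubgroup

variable {G : Type*} [Group G]

lemma card_isCyclic_two_lt_card_eq_one_iff :
    Nat.card {H : Subgroup G // IsCyclic H ∧ 2 < Nat.card H} = 1 ↔
      HasUniqueLargeCyclicSubgroup G := by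
  rw [Nat.card_eq_one_iff_exists]
  constructor
  · rintro ⟨⟨H, hH, hcard⟩, huniq⟩
    obtain ⟨g, rfl⟩ := H.isCyclic_iff_exists_zpowers_eq_top.1 hH
    refine ⟨g, by rwa [← Nat.card_zpowers], fun x hx ↦ ?_⟩
    exact congrArg Subtype.val (huniq ⟨zpowers x, inferInstance, by rwa [Nat.card_zpowers]⟩)
  · rintro ⟨g, hg, huniq⟩
    refine ⟨⟨zpowers g, inferInstance, by rwa [Nat.card_zpowers]⟩, ?_⟩
    rintro ⟨H, hH, hcard⟩
    obtain ⟨x, rfl⟩ := H.isCyclic_iff_exists_zpowers_eq_top.1 hH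
    exact Subtype.ext (huniq x (by rwa [← Nat.card_zpowers]))

lemma HasUniqueLargeCyclicSubgroup.of_mulEquiv {G' : Type*} [Group G'] (e : G ≃* G')
    (h : HasUniqueLargeCyclicSubgroup G') : HasUniqueLargeCyclicSubgroup G := by
  obtain ⟨g, hg, huniq⟩ := h
  refine ⟨e.symm g, by rwa [MulEquiv.orderOf_eq], fun x hx ↦ ?_⟩
  apply map_injective e.injective (f := e.toMonoidHom)
  simp only [MonoidHom.map_zpowers, MulEquiv.coe_toMonoidHom, MulEquiv.apply_symm_apply]
  exact huniq (e x) (by rwa [MulEquiv.orderOf_eq])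

lemma hasUniqueLargeCyclicSubgroup_of_forall_mem_zpowers {n : ℕ}
    (hn : 2 < n ∧ ∀ d, d ∣ n → 2 < d → d = n) (g : G) (hg : orderOf g = n)
    (hmem : ∀ x : G, 2 < orderOf x → x ∈ zpowers g) : HasUniqueLargeCyclicSubgroup G := by
  subst hg
  refine ⟨g, hn.1, fun x hx ↦ ?_⟩
  have : Finite (zpowers g) := (orderOf_pos_iff.1 (by omega)).finite_zpowers.to_subtype
  apply eq_of_le_of_card_ge ((zpowers_le (H := zpowers g)).2 (hmem x hx))
  rw [Nat.card_zpowers, Nat.card_zpowers, hn.2 _ (orderOf_dvd_of_mem_zpowers (hmem x hx)) hx]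

lemma hasUniqueLargeCyclicSubgroup_multiplicative_zmod {n : ℕ}
    (hn : 2 < n ∧ ∀ d, d ∣ n → 2 < d → d = n) :
    HasUniqueLargeCyclicSubgroup (Multiplicative (ZMod n)) := by
  have : NeZero n := ⟨by omega⟩
  obtain ⟨g, hg⟩ := IsCyclic.exists_generator (α := Multiplicative (ZMod n))
  have hgn : orderOf g = n := by
    rw [orderOf_eq_card_of_forall_mem_zpowers hg, Nat.card_congr Multiplicative.toAdd,
      Nat.card_zmod]
  exact hasUniqueLargeCyclicSubgroup_of_forall_mem_zpowers hn g hgn fun x _ ↦ hg x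

lemma hasUniqueLargeCyclicSubgroup_dihedralGroup {n : ℕ}
    (hn : 2 < n ∧ ∀ d, d ∣ n → 2 < d → d = n) :
    HasUniqueLargeCyclicSubgroup (DihedralGroup n) := by
  have : NeZero n := ⟨by omega⟩
  refine hasUniqueLargeCyclicSubgroup_of_forall_mem_zpowers hn _ DihedralGroup.orderOf_r_one ?_
  rintro (i | i) hx
  · exact ⟨(i.cast : ℤ), by simp⟩
  · simp [DihedralGroup.orderOf_sr] at hx

lemma eq_orderOf_of_dvd_of_forall_zpowers_eq {g : G} (hg : 2 < orderOf g)
    (huniq : ∀ x : G, 2 < orderOf x → zpowers x = zpowers g) {d : ℕ} (hd : d ∣ orderOf g)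
    (hd2 : 2 < d) : d = orderOf g := by
  have hx := orderOf_pow_orderOf_div (by omega) hd
  calc d = Nat.card (zpowers (g ^ (orderOf g / d))) := by rw [Nat.card_zpowers, hx]
    _ = orderOf g := by rw [huniq _ (by omega), Nat.card_zpowers]

end UniqueLargeCyclicSubgroup

section Involutions

variable {G : Type*} [Group G] {H : Subgroup G}

lemma conj_eq_inv_of_notMem (hsq : ∀ x ∉ H, x ^ 2 = 1) {g x : G} (hg : g ∈ H) (hx : x ∉ H) :
    x * g * x⁻¹ = g⁻¹ := by
  have hxg : x * g ∉ H := fun h ↦ hx (by simpa using H.mul_mem h (H.inv_mem hg))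
  have hx2 : x⁻¹ = x := inv_eq_of_mul_eq_one_right (by simpa [sq] using hsq x hx)
  rw [hx2]
  exact eq_inv_of_mul_eq_one_left (by simpa [sq, mul_assoc] using hsq _ hxg)

lemma mul_mem_of_notMem (hsq : ∀ x ∉ H, x ^ 2 = 1) {g t x : G} (hg : g ∈ H)
    (hg2 : g ^ 2 ≠ 1) (ht : t ∉ H) (hx : x ∉ H) : t * x ∈ H := by
  by_contra htx
  have key : t * x * g * (t * x)⁻¹ = (t * g * t⁻¹)⁻¹ := by
    calc t * x * g * (t * x)⁻¹ = t * (x * g * x⁻¹)⁻¹⁻¹ * t⁻¹ := by group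
      _ = (t * g * t⁻¹)⁻¹ := by rw [conj_eq_inv_of_notMem hsq hg hx]; group
  rw [conj_eq_inv_of_notMem hsq hg htx, conj_eq_inv_of_notMem hsq hg ht, inv_inv] at key
  exact hg2 (by rw [sq, mul_eq_one_iff_eq_inv, key])

end Involutions

namespace DihedralGroup

variable {n : ℕ} {G : Type*} [Group G]

lemma exists_eq_r_or_eq_sr_intCast (a : DihedralGroup n) : ∃ k : ℤ, a = r k ∨ a = sr k := by
  rcases a with i | i <;> obtain ⟨k, rfl⟩ := ZMod.intCast_surjective i <;> simp

def liftFun (g t : G) : DihedralGroup n → G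
  | r i => g ^ i.val
  | sr i => t * g ^ i.val

variable [NeZero n] {g t : G}

lemma liftFun_r_intCast (hg : g ^ n = 1) (k : ℤ) :
    liftFun g t (r k : DihedralGroup n) = g ^ k := by
  rw [liftFun, ← zpow_natCast, ZMod.val_intCast, ← zpow_eq_zpow_emod' k hg]

lemma liftFun_sr_intCast (hg : g ^ n = 1) (k : ℤ) :
    liftFun g t (sr k : DihedralGroup n) = t * g ^ k :=
  congrArg (t * ·) (liftFun_r_intCast (t := t) hg k)

lemma liftFun_mul (hg : g ^ n = 1) (ht : t ^ 2 = 1) (hconj : t * g * t⁻¹ = g⁻¹)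
    (a b : DihedralGroup n) : liftFun g t (a * b) = liftFun g t a * liftFun g t b := by
  have htinv : t⁻¹ = t := inv_eq_of_mul_eq_one_right (by rwa [sq] at ht)
  have hcomm (k : ℤ) : t * g ^ k = g ^ (-k) * t := by
    rw [zpow_neg, ← inv_zpow, ← hconj, conj_zpow, htinv, mul_assoc, ← sq, ht, mul_one]
  have hcomm' (k : ℤ) : g ^ k * t = t * g ^ (-k) := by rw [hcomm, neg_neg]
  obtain ⟨k, rfl | rfl⟩ := a.exists_eq_r_or_eq_sr_intCast <;>
    obtain ⟨l, rfl | rfl⟩ := b.exists_eq_r_or_eq_sr_intCast <;>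
    simp only [r_mul_r, r_mul_sr, sr_mul_r, sr_mul_sr, ← Int.cast_add, ← Int.cast_sub,
      liftFun_r_intCast hg, liftFun_sr_intCast hg]
  · exact zpow_add g k l
  · rw [← mul_assoc, hcomm', mul_assoc, ← zpow_add, sub_eq_neg_add]
  · rw [mul_assoc, ← zpow_add]
  · rw [← mul_assoc, hcomm, mul_assoc, mul_assoc, ← mul_assoc t, ← sq, ht, one_mul,
      ← zpow_add, sub_eq_neg_add]

def lift (hg : g ^ n = 1) (ht : t ^ 2 = 1) (hconj : t * g * t⁻¹ = g⁻¹) :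
    DihedralGroup n →* G :=
  MonoidHom.mk' (liftFun g t) (liftFun_mul hg ht hconj)

lemma lift_r_intCast (hg : g ^ n = 1) (ht : t ^ 2 = 1) (hconj : t * g * t⁻¹ = g⁻¹) (k : ℤ) :
    lift hg ht hconj (r k) = g ^ k :=
  liftFun_r_intCast (t := t) hg k

lemma lift_sr_intCast (hg : g ^ n = 1) (ht : t ^ 2 = 1) (hconj : t * g * t⁻¹ = g⁻¹) (k : ℤ) :
    lift hg ht hconj (sr k) = t * g ^ k :=
  liftFun_sr_intCast hg k

end DihedralGroup

lemma nonempty_mulEquiv_dihedralGroup {G : Type*} [Group G] {g t : G} (hg : IsOfFinOrder g)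
    (ht : t ∉ zpowers g) (ht2 : t ^ 2 = 1) (hconj : t * g * t⁻¹ = g⁻¹)
    (hcover : ∀ x ∉ zpowers g, t * x ∈ zpowers g) :
    Nonempty (G ≃* DihedralGroup (orderOf g)) := by
  have : NeZero (orderOf g) := ⟨hg.orderOf_pos.ne'⟩
  let φ := DihedralGroup.lift (pow_orderOf_eq_one g) ht2 hconj
  have hr := DihedralGroup.lift_r_intCast (pow_orderOf_eq_one g) ht2 hconj
  have hsr := DihedralGroup.lift_sr_intCast (pow_orderOf_eq_one g) ht2 hconj
  have hinj : Function.Injective φ := by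
    refine (injective_iff_map_eq_one φ).2 fun a ha ↦ ?_
    obtain ⟨k, rfl | rfl⟩ := a.exists_eq_r_or_eq_sr_intCast
    · rw [(ZMod.intCast_zmod_eq_zero_iff_dvd k _).2
        (orderOf_dvd_iff_zpow_eq_one.2 ((hr k).symm.trans ha)), DihedralGroup.r_zero]
    · have hk : t * g ^ k = 1 := (hsr k).symm.trans ha
      exact absurd (eq_inv_of_mul_eq_one_left hk ▸ inv_mem (zpow_mem (mem_zpowers g) k)) ht
  have hsurj : Function.Surjective φ := by
    intro x
    by_cases hx : x ∈ zpowers g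
    · obtain ⟨k, rfl⟩ := hx
      exact ⟨.r k, hr k⟩
    · obtain ⟨k, hk : g ^ k = t * x⟩ := hcover x hx
      refine ⟨.sr k, ?_⟩
      rw [hsr, hk, ← mul_assoc, ← sq, ht2, one_mul]
  exact ⟨(MulEquiv.ofBijective φ ⟨hinj, hsurj⟩).symm⟩

section Classification

variable {G : Type*} [Group G] [Finite G]

lemma sq_eq_one_of_notMem_zpowers {g : G}
    (huniq : ∀ x : G, 2 < orderOf x → zpowers x = zpowers g) {x : G} (hx : x ∉ zpowers g) :
    x ^ 2 = 1 := by
  rw [sq_eq_one_iff_orderOf_le_two (isOfFinOrder_of_finite x)]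
  by_contra! h
  exact hx (huniq x h ▸ mem_zpowers x)

theorem HasUniqueLargeCyclicSubgroup.exists_mulEquiv (h : HasUniqueLargeCyclicSubgroup G) :
    ∃ n : ℕ, (2 < n ∧ ∀ d, d ∣ n → 2 < d → d = n) ∧
      (Nonempty (G ≃* Multiplicative (ZMod n)) ∨ Nonempty (G ≃* DihedralGroup n)) := by
  obtain ⟨g, hg, huniq⟩ := h
  refine ⟨orderOf g, ⟨hg, fun d ↦ eq_orderOf_of_dvd_of_forall_zpowers_eq hg huniq⟩, ?_⟩
  by_cases hcyc : ∀ x, x ∈ zpowers g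
  · exact Or.inl ⟨(zmodMulEquivOfGenerator hcyc
      (orderOf_eq_card_of_forall_mem_zpowers hcyc).symm).symm⟩
  · obtain ⟨t, ht⟩ := not_forall.1 hcyc
    have hsq : ∀ x ∉ zpowers g, x ^ 2 = 1 := fun x ↦ sq_eq_one_of_notMem_zpowers huniq
    have hg2 : g ^ 2 ≠ 1 := fun h ↦ by have := orderOf_le_of_pow_eq_one two_pos h; omega
    exact Or.inr (nonempty_mulEquiv_dihedralGroup (isOfFinOrder_of_finite g) ht (hsq t ht)
      (conj_eq_inv_of_notMem hsq (mem_zpowers g) ht)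
      fun x hx ↦ mul_mem_of_notMem hsq (mem_zpowers g) hg2 ht hx)

end Classification

theorem stmt_3 (G : Type*) [Group G] [Finite G] :
    numInv G = numCyc G - 1 ↔
      Nonempty (G ≃* Multiplicative (ZMod 4)) ∨
      Nonempty (G ≃* DihedralGroup 4) ∨
      (∃ p : ℕ, p.Prime ∧ Odd p ∧ Nonempty (G ≃* Multiplicative (ZMod p))) ∨
      (∃ p : ℕ, p.Prime ∧ Odd p ∧ Nonempty (G ≃* DihedralGroup p)) := by
  rw [numInv_eq_numCyc_sub_one_iff, card_isCyclic_two_lt_card_eq_one_iff]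
  constructor
  · intro h
    obtain ⟨n, hn, hiso⟩ := h.exists_mulEquiv
    rcases Nat.two_lt_and_forall_dvd_iff.1 hn with rfl | ⟨hp, hodd⟩
    · tauto
    · rcases hiso with hiso | hiso
      · exact Or.inr (Or.inr (Or.inl ⟨n, hp, hodd, hiso⟩))
      · exact Or.inr (Or.inr (Or.inr ⟨n, hp, hodd, hiso⟩))
  · have h4 := Nat.two_lt_and_forall_dvd_iff.2 (.inl rfl)
    rintro (⟨⟨e⟩⟩ | ⟨⟨e⟩⟩ | ⟨p, hp, hodd, ⟨e⟩⟩ | ⟨p, hp, hodd, ⟨e⟩⟩)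
    · exact (hasUniqueLargeCyclicSubgroup_multiplicative_zmod h4).of_mulEquiv e
    · exact (hasUniqueLargeCyclicSubgroup_dihedralGroup h4).of_mulEquiv e
    · exact (hasUniqueLargeCyclicSubgroup_multiplicative_zmod
        (Nat.two_lt_and_forall_dvd_iff.2 (.inr ⟨hp, hodd⟩))).of_mulEquiv e
    · exact (hasUniqueLargeCyclicSubgroup_dihedralGroup
        (Nat.two_lt_and_forall_dvd_iff.2 (.inr ⟨hp, hodd⟩))).of_mulEquiv e
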